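/- arXiv:1405.4427 — 4 statements merged into one kernel-verified Lean document; each statement's English description precedes it below -/
import Mathlib

section
/- Let H be a complex Hilbert space, α : H → H a linear isometry, E = {x ∈ H : α(x) = μx for some μ ∈ ℂ with |μ| = 1} the set of unimodular eigenvectors, and K the closed linear span of E. Then α maps the orthogonal complement K^⊥ into itself. -/
namespace Submodule

variable {𝕜 E : Type*} [RCLike 𝕜] [NormedAddCommGroup E] [InnerProductSpace 𝕜 E]

theorem mem_orthogonal_span_iff {s : Set E} {v : E} :
    v ∈ (span 𝕜 s)ᗮ ↔ ∀ u ∈ s, inner 𝕜 u v = 0 := by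
  simp_rw [mem_orthogonal, ← mem_orthogonal_singleton_iff_inner_left]
  exact span_le

end Submodule

namespace LinearIsometry

variable {𝕜 E : Type*} [RCLike 𝕜] [NormedAddCommGroup E] [InnerProductSpace 𝕜 E]

-- The eigenvalue of a nonzero eigenvector cannot vanish,
-- and `⟪x, y⟫ = ⟪f x, f y⟫ = conj μ * ⟪x, f y⟫`.
theorem inner_map_eq_zero_of_eigenvector (f : E →ₗᵢ[𝕜] E) {x y : E} {μ : 𝕜}
    (hx : f x = μ • x) (hxy : inner 𝕜 x y = 0) : inner 𝕜 x (f y) = 0 := by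
  by_cases hμ : μ = 0
  · have hx0 : x = 0 := f.injective (by rw [hx, hμ, zero_smul, map_zero])
    rw [hx0, inner_zero_left]
  · have h : (starRingEnd 𝕜) μ * inner 𝕜 x (f y) = 0 := by
      rw [← inner_smul_left, ← hx, f.inner_map_map, hxy]
    exact (mul_eq_zero.mp h).resolve_left (by simpa using hμ)

theorem map_mem_orthogonal_closure_span_eigenvectors (f : E →ₗᵢ[𝕜] E)
    {s : Set E} (hs : ∀ x ∈ s, ∃ μ : 𝕜, f x = μ • x) {y : E}
    (hy : y ∈ (Submodule.span 𝕜 s).topologicalClosureᗮ) :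
    f y ∈ (Submodule.span 𝕜 s).topologicalClosureᗮ := by
  rw [Submodule.orthogonal_closure, Submodule.mem_orthogonal_span_iff] at hy ⊢
  intro x hx
  obtain ⟨μ, hμ⟩ := hs x hx
  exact f.inner_map_eq_zero_of_eigenvector hμ (hy x hx)

end LinearIsometry

theorem orthocomplement_eigenspan_invariant_general
    {H : Type*} [NormedAddCommGroup H] [InnerProductSpace ℂ H]
    (α : H →L[ℂ] H) (hiso : ∀ y : H, ‖α y‖ = ‖y‖)
    (E : Set H) (hE : E = {y : H | ∃ μ : ℂ, ‖μ‖ = 1 ∧ α y = μ • y})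
    (K : Submodule ℂ H) (hK : K = (Submodule.span ℂ E).topologicalClosure) :
    ∀ y ∈ Kᗮ, α y ∈ Kᗮ := by
  intro y hy
  subst hK
  let f : H →ₗᵢ[ℂ] H := ⟨α.toLinearMap, hiso⟩
  have hE_eigen : ∀ x ∈ E, ∃ μ : ℂ, f x = μ • x := by
    rw [hE]
    rintro x ⟨μ, -, hμ⟩
    exact ⟨μ, hμ⟩
  exact f.map_mem_orthogonal_closure_span_eigenvectors hE_eigen hy

/-- the orthogonal complement of the closed span of the unimodular
eigenvectors of a linear isometry α is invariant under α. -/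
theorem orthocomplement_eigenspan_invariant
    {H : Type*} [NormedAddCommGroup H] [InnerProductSpace ℂ H] [CompleteSpace H]
    (α : H →L[ℂ] H) (hiso : ∀ y : H, ‖α y‖ = ‖y‖)
    (E : Set H) (hE : E = {y : H | ∃ μ : ℂ, ‖μ‖ = 1 ∧ α y = μ • y})
    (K : Submodule ℂ H) (hK : K = (Submodule.span ℂ E).topologicalClosure) :
    ∀ y ∈ Kᗮ, α y ∈ Kᗮ :=
  orthocomplement_eigenspan_invariant_general α hiso E hE K hK
end

section
/- Let H be a complex Hilbert space, α a linear isometry of H, K the closed linear span of the unimodular eigenvectors of α, and x ∈ K^⊥. Then for every t ∈ ℝ, the Cesàro averages (1/n) ∑_{l=1}^{n} e^{2πilt} α^l(x) converge in norm to 0 as n → ∞. -/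
/-!
Put `β = e^{2πit} • α`, a contraction whose `l`-th power is `e^{2πilt} • α^l`, so the twisted
averages are the Birkhoff averages of `β` at `β x`. A fixed point of `β` is an eigenvector of `α`
with eigenvalue `e^{-2πit}`, hence lies in `K`. Since `Kᗮ = (span E)ᗮ` is invariant under the
isometry `α`, `β x` is orthogonal to the fixed points of `β`, and the mean ergodic theorem sends
its Birkhoff averages to its projection onto those fixed points, which is `0`.
-/

open Filter Finset Submodule
open scoped InnerProductSpace

section InnerProductSpace

variable {𝕜 E : Type*} [RCLike 𝕜] [NormedAddCommGroup E] [InnerProductSpace 𝕜 E]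

theorem Submodule.mem_orthogonal_span_iff_s5 {S : Set E} {x : E} :
    x ∈ (span 𝕜 S)ᗮ ↔ ∀ y ∈ S, ⟪y, x⟫_𝕜 = 0 := by
  rw [← span_singleton_le_iff_mem, ← isOrtho_iff_le, isOrtho_comm, isOrtho_span]
  simp

theorem LinearIsometry.map_mem_orthogonal_span_of_eigenvectors (α : E →ₗᵢ[𝕜] E) {S : Set E}
    (hS : ∀ y ∈ S, ∃ μ : 𝕜, μ ≠ 0 ∧ α y = μ • y) {x : E} (hx : x ∈ (span 𝕜 S)ᗮ) :
    α x ∈ (span 𝕜 S)ᗮ := by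
  rw [mem_orthogonal_span_iff_s5] at hx ⊢
  intro y hy
  obtain ⟨μ, hμ, hαy⟩ := hS y hy
  have hy_eq : α (μ⁻¹ • y) = y := by rw [map_smul, hαy, inv_smul_smul₀ hμ]
  rw [← hy_eq, α.inner_map_map, inner_smul_left, hx y hy, mul_zero]

theorem ContinuousLinearMap.tendsto_birkhoffAverage_zero_of_mem_orthogonal_eqLocus
    [CompleteSpace E] (f : E →L[𝕜] E) (hf : ‖f‖ ≤ 1) {x : E}
    (hx : x ∈ (f.eqLocus (1 : E →L[𝕜] E))ᗮ) :
    Tendsto (birkhoffAverage 𝕜 f _root_.id · x) atTop (nhds 0) := by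
  have h := f.tendsto_birkhoffAverage_orthogonalProjection hf x
  rwa [orthogonalProjectionOnto_apply_of_mem_orthogonal hx, ZeroMemClass.coe_zero] at h

end InnerProductSpace

theorem birkhoffSum_apply_eq_sum_Icc {α M : Type*} [AddCommMonoid M] (f : α → α) (g : α → M)
    (n : ℕ) (x : α) : birkhoffSum f g n (f x) = ∑ l ∈ Icc 1 n, g (f^[l] x) := by
  rw [birkhoffSum, ← Ico_add_one_right_eq_Icc, sum_Ico_eq_sum_range, Nat.add_sub_cancel]
  simp [Function.iterate_succ_apply, add_comm]

/-- for x orthogonal to the closed span of the unimodular eigenvectors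
of a linear isometry α, the twisted Cesàro averages converge to 0 in norm for every t. -/
theorem twisted_averages_tendsto_zero_on_orthocomplement
    {H : Type*} [NormedAddCommGroup H] [InnerProductSpace ℂ H] [CompleteSpace H]
    (α : H →L[ℂ] H) (hiso : ∀ y : H, ‖α y‖ = ‖y‖)
    (E : Set H) (hE : E = {y : H | ∃ μ : ℂ, ‖μ‖ = 1 ∧ α y = μ • y})
    (K : Submodule ℂ H) (hK : K = (Submodule.span ℂ E).topologicalClosure)
    (x : H) (hx : x ∈ Kᗮ) :
    ∀ t : ℝ, Tendsto (fun n : ℕ =>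
        (n : ℂ)⁻¹ • ∑ l ∈ Finset.Icc 1 n,
          Complex.exp (2 * Real.pi * Complex.I * l * t) • (α ^ l) x)
      atTop (nhds 0) := by
  intro t
  set c := Complex.exp (2 * Real.pi * t * Complex.I) with hc_def
  have hc : ‖c‖ = 1 := by simpa using Complex.norm_exp_ofReal_mul_I (2 * Real.pi * t)
  have hxE : x ∈ (span ℂ E)ᗮ := by rwa [hK, orthogonal_closure] at hx
  have hαx : α x ∈ (span ℂ E)ᗮ := by
    refine LinearIsometry.map_mem_orthogonal_span_of_eigenvectors ⟨α.toLinearMap, hiso⟩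
      (fun y hy => ?_) hxE
    obtain ⟨μ, hμ, hαy⟩ := hE ▸ hy
    exact ⟨μ, by rintro rfl; simp at hμ, hαy⟩
  have hfix : (c • α).eqLocus 1 ≤ span ℂ E := fun y (hy : c • α y = y) => by
    have hαy : α y = c⁻¹ • y := (eq_inv_smul_iff₀ (by simp [c])).mpr hy
    exact subset_span (hE ▸ ⟨c⁻¹, by rw [norm_inv, hc, inv_one], hαy⟩)
  have hnorm : ‖c • α‖ ≤ 1 :=
    ContinuousLinearMap.opNorm_le_bound _ zero_le_one fun y => by simp [norm_smul, hc, hiso]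
  refine ((c • α).tendsto_birkhoffAverage_zero_of_mem_orthogonal_eqLocus hnorm
    (x := (c • α) x) (orthogonal_le hfix (smul_mem _ c hαx))).congr fun n => ?_
  rw [birkhoffAverage, birkhoffSum_apply_eq_sum_Icc]
  refine congrArg _ (sum_congr rfl fun l _ => ?_)
  rw [id, ← FunLike.coe_pow_eq_iterate, smul_pow, smul_apply, hc_def, ← Complex.exp_nat_mul]
  ring_nf
end

section
/- Let H be a complex Hilbert space and T : H → H a linear isometry. Then for every x ∈ H the Cesàro averages (1/n) ∑_{k=0}^{n-1} T^k(x) converge in norm to P(x), where P is the orthogonal projection onto the fixed space {y ∈ H : T(y) = y} (mean ergodic theorem for isometries). -/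
open Filter Finset
open scoped InnerProductSpace

/-- mean ergodic theorem for a linear isometry T of a complex Hilbert
space: the Cesàro averages (1/n) ∑_{k<n} T^k x converge in norm to the orthogonal
projection of x onto the fixed space {y : T y = y}; the limit y is characterized by
T y = y together with x - y being orthogonal to every fixed vector. -/
theorem mean_ergodic_isometry
    {H : Type*} [NormedAddCommGroup H] [InnerProductSpace ℂ H] [CompleteSpace H]
    (T : H →ₗᵢ[ℂ] H) (x : H) :
    ∃ y : H, T y = y ∧ (∀ z : H, T z = z → ⟪x - y, z⟫_ℂ = 0) ∧
      Tendsto (fun n : ℕ => (n : ℂ)⁻¹ • ∑ k ∈ Finset.range n, (⇑T)^[k] x)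
        atTop (nhds y) := by
  set A : H →L[ℂ] H := T.toContinuousLinearMap
  set fixedSpace := A.eqLocus (1 : H →L[ℂ] H)
  -- `birkhoffAverage ℂ A id n x` unfolds definitionally to the Cesàro average above.
  refine ⟨fixedSpace.orthogonalProjectionOnto x, (fixedSpace.orthogonalProjectionOnto x).2,
    fun z hz => fixedSpace.starProjection_inner_eq_zero x z hz,
    A.tendsto_birkhoffAverage_orthogonalProjection T.norm_toContinuousLinearMap_le x⟩
end

section
/- Let H be a complex Hilbert space, α : H → H an ergodic linear isometry (fixed space ℂ·u for a unit vector u) which is also multiplicative in the following abstract sense relative to a von Neumann algebra structure. Let E = {x ∈ H : α(x) = μx, |μ| = 1} and K = closure(span E). Suppose x ∈ K^⊥ and let σ_x be the positive finite Borel measure on ℝ/ℤ with σ̂_x(l) = ⟨x, α^l(x)⟩ for l ≥ 0 (Herglotz representation of the positive definite sequence γ_x). Then σ_x is a continuous measure (has no atoms). -/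
open Filter Finset MeasureTheory
open scoped InnerProductSpace Topology

/-!
For `s` on the circle, the Cesàro means `N⁻¹ ∑_{l<N} e(-l s) σ̂(l)` tend to `σ {s}` (Wiener: the
kernel `N⁻¹ ∑_{l<N} e(l (t - s))` tends boundedly to the indicator of `{s}`), and by the hypothesis
on `σ̂` they equal `⟪x, N⁻¹ ∑_{l<N} e(-l s) α^l x⟫`. By the mean ergodic theorem for the
contraction `e(-s) α`, these averages of `x` converge to the projection of `x` onto the eigenspace
of `α` for the eigenvalue `e(s)`, which is `0` because `x ⊥ K`.
-/

section GeomAverage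

variable {𝕜 : Type*} [RCLike 𝕜]

theorem norm_inv_natCast_mul_geom_sum_le_one {z : 𝕜} (hz : ‖z‖ ≤ 1) (N : ℕ) :
    ‖(N : 𝕜)⁻¹ * ∑ l ∈ range N, z ^ l‖ ≤ 1 := by
  rcases N.eq_zero_or_pos with rfl | hN
  · simp
  have hsum : ‖∑ l ∈ range N, z ^ l‖ ≤ N :=
    (norm_sum_le _ _).trans <| (sum_le_sum (s := range N) fun l _ =>
      (norm_pow_le z l).trans (pow_le_one₀ (norm_nonneg z) hz)).trans_eq (by simp)
  rw [norm_mul, norm_inv, RCLike.norm_natCast]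
  exact inv_mul_le_one_of_le₀ hsum (Nat.cast_nonneg N)

theorem tendsto_inv_natCast_mul_geom_sum_of_ne_one {z : 𝕜} (hz : ‖z‖ ≤ 1) (h1 : z ≠ 1) :
    Tendsto (fun N : ℕ => (N : 𝕜)⁻¹ * ∑ l ∈ range N, z ^ l) atTop (𝓝 0) := by
  have hz1 : 0 < ‖z - 1‖ := norm_pos_iff.mpr (sub_ne_zero.mpr h1)
  have hbound : ∀ N : ℕ, ‖(N : 𝕜)⁻¹ * ∑ l ∈ range N, z ^ l‖ ≤ 2 / ‖z - 1‖ / N := fun N => by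
    have hnum : ‖z ^ N - 1‖ ≤ 2 :=
      (norm_sub_le _ _).trans <| by
        rw [norm_one]; linarith [(norm_pow_le z N).trans (pow_le_one₀ (norm_nonneg z) hz)]
    rw [geom_sum_eq h1, norm_mul, norm_inv, RCLike.norm_natCast, norm_div, inv_mul_eq_div]
    gcongr
  exact squeeze_zero_norm hbound (tendsto_const_div_atTop_nhds_zero_nat _)

end GeomAverage

section Wiener

variable {T : ℝ}

theorem fourier_neg_natCast_apply (l : ℕ) (s : AddCircle T) :
    fourier (-(l : ℤ)) s = fourier (-1) s ^ l := by
  rw [fourier_apply, fourier_apply, ← Circle.coe_pow, ← AddCircle.toCircle_nsmul, neg_zsmul,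
    neg_zsmul, one_zsmul, natCast_zsmul, smul_neg]

theorem fourier_neg_mul_fourier_eq_pow (l : ℕ) (s t : AddCircle T) :
    fourier (-(l : ℤ)) s * fourier (l : ℤ) t = (AddCircle.toCircle (t - s) : ℂ) ^ l := by
  have hexp : -(l : ℤ) • s + (l : ℤ) • t = l • (t - s) := by
    rw [neg_zsmul, natCast_zsmul, natCast_zsmul, nsmul_sub, neg_add_eq_sub]
  rw [fourier_apply, fourier_apply, ← Circle.coe_mul, ← AddCircle.toCircle_add, hexp,
    AddCircle.toCircle_nsmul, Circle.coe_pow]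

theorem tendsto_cesaro_fourier_integral_measureReal_singleton [Fact (0 < T)]
    (σ : Measure (AddCircle T)) [IsFiniteMeasure σ] (s : AddCircle T) :
    Tendsto (fun N : ℕ =>
        (N : ℂ)⁻¹ * ∑ l ∈ range N, fourier (-(l : ℤ)) s * ∫ t, fourier (l : ℤ) t ∂σ)
      atTop (𝓝 (σ.real {s} : ℂ)) := by
  set kernel : ℕ → AddCircle T → ℂ :=
    fun N t => (N : ℂ)⁻¹ * ∑ l ∈ range N, (AddCircle.toCircle (t - s) : ℂ) ^ l
  have hcont : ∀ N, Continuous (kernel N) := fun N => by fun_prop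
  have hintegral : ∀ N : ℕ, (N : ℂ)⁻¹ * ∑ l ∈ range N, fourier (-(l : ℤ)) s
      * ∫ t, fourier (l : ℤ) t ∂σ = ∫ t, kernel N t ∂σ := fun N => by
    have hpow : ∀ l : ℕ, Integrable (fun t => (AddCircle.toCircle (t - s) : ℂ) ^ l) σ := fun l =>
      (by fun_prop : Continuous _).integrable_of_hasCompactSupport (.of_compactSpace _)
    simp only [kernel, ← integral_const_mul, fourier_neg_mul_fourier_eq_pow]
    rw [integral_const_mul, integral_finsetSum _ fun l _ => hpow l]
  have hlimit : ∀ t, Tendsto (kernel · t) atTop (𝓝 (Set.indicator {s} (fun _ => (1 : ℂ)) t)) := by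
    intro t
    by_cases hts : t = s
    · refine tendsto_const_nhds.congr' ?_
      filter_upwards [eventually_ne_atTop 0] with N hN
      simp [kernel, hts, hN]
    · have hne : (AddCircle.toCircle (t - s) : ℂ) ≠ 1 := fun h => hts <| sub_eq_zero.mp <|
        AddCircle.injective_toCircle (Fact.out : 0 < T).ne' <| by
          simpa using Circle.coe_inj.mp (h.trans Circle.coe_one.symm)
      simpa [hts] using tendsto_inv_natCast_mul_geom_sum_of_ne_one (Circle.norm_coe _).le hne
  have hmass : ∫ t, Set.indicator {s} (fun _ => (1 : ℂ)) t ∂σ = σ.real {s} := by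
    rw [integral_indicator_const _ (measurableSet_singleton s), Complex.real_smul, mul_one]
  simp_rw [hintegral, ← hmass]
  refine tendsto_integral_of_dominated_convergence (fun _ => 1)
    (fun N => (hcont N).aestronglyMeasurable) (integrable_const 1) (fun N => ?_)
    (Eventually.of_forall hlimit)
  exact Eventually.of_forall fun t => norm_inv_natCast_mul_geom_sum_le_one (Circle.norm_coe _).le N

end Wiener

section MeanErgodic

variable {𝕜 H : Type*} [RCLike 𝕜] [NormedAddCommGroup H] [InnerProductSpace 𝕜 H]

theorem LinearIsometry.iterate_smul_toContinuousLinearMap_apply (α : H →ₗᵢ[𝕜] H) (c : 𝕜)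
    (l : ℕ) (x : H) : (⇑(c • α.toContinuousLinearMap))^[l] x = c ^ l • (⇑α)^[l] x := by
  induction l with
  | zero => simp
  | succ l ih =>
    rw [Function.iterate_succ_apply', ih, Function.iterate_succ_apply', smul_apply,
      LinearIsometry.coe_toContinuousLinearMap, map_smul, smul_smul, pow_succ']

theorem LinearIsometry.tendsto_cesaro_pow_smul_iterate_of_forall_inner_eq_zero [CompleteSpace H]
    (α : H →ₗᵢ[𝕜] H) {c : 𝕜} (hc : ‖c‖ ≤ 1) {x : H}
    (hx : ∀ w, c • α w = w → ⟪w, x⟫_𝕜 = 0) :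
    Tendsto (fun N : ℕ => (N : 𝕜)⁻¹ • ∑ l ∈ range N, c ^ l • (⇑α)^[l] x) atTop (𝓝 0) := by
  set f : H →L[𝕜] H := c • α.toContinuousLinearMap
  have hf : ‖f‖ ≤ 1 := (norm_smul_le _ _).trans <|
    mul_le_one₀ hc (norm_nonneg _) α.norm_toContinuousLinearMap_le
  have hproj : (f.eqLocus (1 : H →L[𝕜] H)).orthogonalProjectionOnto x = 0 :=
    Submodule.orthogonalProjectionOnto_eq_zero_iff.mpr hx
  have hlim := f.tendsto_birkhoffAverage_orthogonalProjection hf x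
  rw [hproj, ZeroMemClass.coe_zero] at hlim
  refine hlim.congr fun N => ?_
  simp only [birkhoffAverage, birkhoffSum, id_eq, f, α.iterate_smul_toContinuousLinearMap_apply]

end MeanErgodic

/-- if x is orthogonal to the closed span K of the unimodular
eigenvectors of a linear isometry α of a complex Hilbert space, and σ is the
Herglotz representing measure of the positive definite correlation sequence
γ_x(l) = ⟪x, α^l x⟫, then σ is continuous (has no atoms). -/
theorem spectral_measure_continuous_on_orthocomplement
    {H : Type*} [NormedAddCommGroup H] [InnerProductSpace ℂ H] [CompleteSpace H]
    (α : H →ₗᵢ[ℂ] H)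
    (E : Set H) (hE : E = {y : H | ∃ μ : ℂ, ‖μ‖ = 1 ∧ α y = μ • y})
    (K : Submodule ℂ H) (hK : K = (Submodule.span ℂ E).topologicalClosure)
    (x : H) (hx : x ∈ Kᗮ)
    (σ : Measure (AddCircle (1 : ℝ))) [IsFiniteMeasure σ]
    (hσ : ∀ l : ℕ, (∫ t : AddCircle (1 : ℝ), fourier (l : ℤ) t ∂σ) = ⟪x, (⇑α)^[l] x⟫_ℂ) :
    ∀ s : AddCircle (1 : ℝ), σ {s} = 0 := by
  intro s
  have hx_perp : ∀ w, fourier (-1) s • α w = w → ⟪w, x⟫_ℂ = 0 := fun w hw => by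
    have heigen : α w = fourier 1 s • w := by
      conv_rhs => rw [← hw]
      rw [smul_smul, ← fourier_add, add_neg_cancel, fourier_zero, one_smul]
    have hwE : w ∈ E := hE ▸ ⟨fourier 1 s, Circle.norm_coe _, heigen⟩
    have hwK : w ∈ K := hK ▸ Submodule.le_topologicalClosure _ (Submodule.subset_span hwE)
    exact (Submodule.mem_orthogonal K x).mp hx w hwK
  have hav := α.tendsto_cesaro_pow_smul_iterate_of_forall_inner_eq_zero
    (c := fourier (-1) s) (Circle.norm_coe _).le hx_perp
  have hinner := (tendsto_const_nhds (x := x)).inner (𝕜 := ℂ) hav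
  simp only [inner_zero_right, inner_smul_right, inner_sum, ← fourier_neg_natCast_apply,
    ← hσ] at hinner
  have hmass := tendsto_nhds_unique
    (tendsto_cesaro_fourier_integral_measureReal_singleton σ s) hinner
  simpa [measureReal_eq_zero_iff] using hmass
end
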